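/- arXiv:0904.2960 — 4 statements merged into one kernel-verified Lean document; each statement's English description precedes it below -/
import Mathlib

section
/- With S and Š as in the sign fixing step (Š_{pℓ}=0, new row d+1 equal to e_ℓ^t - e_{d'+1}^t appropriately, new column d'+1 equal to S_{pℓ}·e_p - e_{d+1}): for every v ∈ ker S there is a unique v_∞ ∈ ℝ such that the vector (v, v_∞) lies in ker Š, namely v_∞ = v_ℓ; conversely if (v, v_∞) ∈ ker Š then v ∈ ker S. Moreover v has all entries positive (respectively nonnegative) if and only if (v, v_ℓ) does. -/
/-! The last row of `Š` reads `v l - c`, so it forces `c = v l`.  The rows `i < d` differ from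
those of `S` only in row `p`, by `S p l * (c - v l)`, which then vanishes; hence `Š (v, c) = 0`
exactly when `S v = 0` and `c = v l`.  Signs transfer because the appended entry `v l` is
already an entry of `v`. -/

/-- The sign fixing step applied to `S` at the position `(p, l)`:
the entry at `(p, l)` is zeroed out, the new row `d+1` is `e_l - e_{d'+1}`,
and the new column `d'+1` has `S p l` in row `p` and zeros elsewhere. -/
def signFixMat {d d' : ℕ} (S : Matrix (Fin d) (Fin d') ℝ) (p : Fin d) (l : Fin d') :
    Matrix (Fin (d + 1)) (Fin (d' + 1)) ℝ :=
  Matrix.of fun i j =>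
    if hi : (i : ℕ) < d then
      if hj : (j : ℕ) < d' then
        if (i : ℕ) = (p : ℕ) ∧ (j : ℕ) = (l : ℕ) then 0 else S ⟨i, hi⟩ ⟨j, hj⟩
      else if (i : ℕ) = (p : ℕ) then S p l else 0
    else
      if hj : (j : ℕ) < d' then (if (j : ℕ) = (l : ℕ) then 1 else 0)
      else -1

theorem Fin.forall_snoc_apply_self_iff {α : Type*} {n : ℕ} (P : α → Prop) (v : Fin n → α)
    (a : Fin n) : (∀ i, P (Fin.snoc (α := fun _ => α) v (v a) i)) ↔ ∀ i, P (v i) := by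
  simp only [Fin.forall_fin_succ', Fin.snoc_castSucc, Fin.snoc_last]
  exact ⟨And.left, fun h => ⟨h, h a⟩⟩

namespace signFixMat

open Matrix

variable {d d' : ℕ} (S : Matrix (Fin d) (Fin d') ℝ) (p : Fin d) (l : Fin d')

@[simp]
lemma castSucc_castSucc (i : Fin d) (j : Fin d') :
    signFixMat S p l i.castSucc j.castSucc = if i = p ∧ j = l then 0 else S i j := by
  simp [signFixMat, Fin.val_eq_val]

@[simp]
lemma castSucc_last (i : Fin d) :
    signFixMat S p l i.castSucc (Fin.last d') = if i = p then S p l else 0 := by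
  simp [signFixMat, Fin.val_eq_val]

@[simp]
lemma last_castSucc (j : Fin d') :
    signFixMat S p l (Fin.last d) j.castSucc = if j = l then 1 else 0 := by
  simp [signFixMat, Fin.val_eq_val]

@[simp]
lemma last_last : signFixMat S p l (Fin.last d) (Fin.last d') = -1 := by
  simp [signFixMat]

lemma mulVec_snoc_castSucc (v : Fin d' → ℝ) (c : ℝ) (i : Fin d) :
    (signFixMat S p l *ᵥ Fin.snoc v c) i.castSucc
      = (S *ᵥ v) i + if i = p then S p l * (c - v l) else 0 := by
  rcases eq_or_ne i p with rfl | hip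
  · simp only [mulVec, dotProduct, Fin.sum_univ_castSucc, castSucc_castSucc, true_and,
      Fin.snoc_castSucc, ite_mul, zero_mul, Finset.sum_ite, Finset.sum_const_zero,
      Finset.filter_ne', Finset.mem_univ, Finset.sum_erase_eq_sub, zero_add, castSucc_last,
      if_pos, Fin.snoc_last]
    ring
  · simp [mulVec, dotProduct, Fin.sum_univ_castSucc, hip]

lemma mulVec_snoc_last (v : Fin d' → ℝ) (c : ℝ) :
    (signFixMat S p l *ᵥ Fin.snoc v c) (Fin.last d) = v l - c := by
  simp only [mulVec, dotProduct, Fin.sum_univ_castSucc, last_castSucc, Fin.snoc_castSucc, ite_mul,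
    one_mul, zero_mul, Finset.sum_ite_eq', Finset.mem_univ, if_true, last_last, Fin.snoc_last,
    neg_mul]
  ring

lemma mulVec_snoc_eq_zero_iff (v : Fin d' → ℝ) (c : ℝ) :
    signFixMat S p l *ᵥ Fin.snoc v c = 0 ↔ S *ᵥ v = 0 ∧ c = v l := by
  simp only [funext_iff, Fin.forall_fin_succ', mulVec_snoc_castSucc, mulVec_snoc_last,
    Pi.zero_apply]
  constructor
  · rintro ⟨hrows, hlast⟩
    have hc : c = v l := by linarith
    subst hc
    simpa using hrows
  · rintro ⟨hv, rfl⟩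
    simp [hv]

end signFixMat

theorem signFix_ker_correspondence_general {d d' : ℕ} (S : Matrix (Fin d) (Fin d') ℝ)
    (p : Fin d) (l : Fin d') :
    (∀ v : Fin d' → ℝ, S.mulVec v = 0 →
      ∃! c : ℝ, (signFixMat S p l).mulVec (Fin.snoc v c) = 0) ∧
    (∀ v : Fin d' → ℝ, S.mulVec v = 0 →
      (signFixMat S p l).mulVec (Fin.snoc v (v l)) = 0) ∧
    (∀ (v : Fin d' → ℝ) (c : ℝ),
      (signFixMat S p l).mulVec (Fin.snoc v c) = 0 → S.mulVec v = 0) ∧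
    (∀ v : Fin d' → ℝ, S.mulVec v = 0 →
      ((∀ i, 0 < v i) ↔ ∀ i, 0 < (Fin.snoc v (v l) : Fin (d' + 1) → ℝ) i)) ∧
    (∀ v : Fin d' → ℝ, S.mulVec v = 0 →
      ((∀ i, 0 ≤ v i) ↔ ∀ i, 0 ≤ (Fin.snoc v (v l) : Fin (d' + 1) → ℝ) i)) := by
  have hker := signFixMat.mulVec_snoc_eq_zero_iff S p l
  have hext : ∀ v, S.mulVec v = 0 → (signFixMat S p l).mulVec (Fin.snoc v (v l)) = 0 :=
    fun v hv => (hker v (v l)).2 ⟨hv, rfl⟩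
  exact ⟨fun v hv => ⟨v l, hext v hv, fun c hc => ((hker v c).1 hc).2⟩, hext,
    fun v c hc => ((hker v c).1 hc).1,
    fun v _ => (Fin.forall_snoc_apply_self_iff (0 < ·) v l).symm,
    fun v _ => (Fin.forall_snoc_apply_self_iff (0 ≤ ·) v l).symm⟩

/-- Correspondence of kernels under the sign fixing step: every `v ∈ ker S`
extends uniquely, by appending `v l`, to a vector in `ker Š`; conversely any
vector `(v, v_∞) ∈ ker Š` has `v ∈ ker S`.  Positivity (resp. nonnegativity)
of entries is preserved under this correspondence. -/
theorem signFix_ker_correspondence {d d' : ℕ} (S : Matrix (Fin d) (Fin d') ℝ)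
    (p : Fin d) (l : Fin d') (hpl : 0 < S p l) :
    (∀ v : Fin d' → ℝ, S.mulVec v = 0 →
      ∃! c : ℝ, (signFixMat S p l).mulVec (Fin.snoc v c) = 0) ∧
    (∀ v : Fin d' → ℝ, S.mulVec v = 0 →
      (signFixMat S p l).mulVec (Fin.snoc v (v l)) = 0) ∧
    (∀ (v : Fin d' → ℝ) (c : ℝ),
      (signFixMat S p l).mulVec (Fin.snoc v c) = 0 → S.mulVec v = 0) ∧
    (∀ v : Fin d' → ℝ, S.mulVec v = 0 →
      ((∀ i, 0 < v i) ↔ ∀ i, 0 < (Fin.snoc v (v l) : Fin (d' + 1) → ℝ) i)) ∧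
    (∀ v : Fin d' → ℝ, S.mulVec v = 0 →
      ((∀ i, 0 ≤ v i) ↔ ∀ i, 0 ≤ (Fin.snoc v (v l) : Fin (d' + 1) → ℝ) i)) :=
  signFix_ker_correspondence_general S p l
end

section
/- Let S be a real d×d' matrix with S_{pℓ} > 0 and Š its sign fixing matrix. Suppose v : ℝ_{>0}^{d} → ℝ_{>0}^{d'} and v̌ : ℝ_{>0}^{d+1} → ℝ_{>0}^{d'+1} are flux maps such that v̌(x, x_∞)_i = v(x)_i for i = 1,...,d' except that v̌(x,x_∞)_ℓ = v(x)_ℓ, and v̌(x,x_∞)_{d'+1} = k·x_∞ for a fixed constant k > 0. Then Š v̌(x, x_∞) = 0 if and only if S v(x) = 0 and k·x_∞ = v(x)_ℓ. In particular, the positive equilibria of the two systems are in bijection via (x) ↦ (x, v(x)_ℓ/k). -/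
section
open Matrix
variable {d d' : ℕ} (S : Matrix (Fin d) (Fin d') ℝ) (p : Fin d) (l : Fin d')

lemma signFixMat_castSucc_castSucc (i : Fin d) (j : Fin d') :
    signFixMat S p l i.castSucc j.castSucc = S i j - if i = p ∧ j = l then S p l else 0 := by
  by_cases h : i = p ∧ j = l
  · obtain ⟨rfl, rfl⟩ := h
    simp [signFixMat]
  · simp [signFixMat, Fin.val_eq_val, h]

lemma signFixMat_castSucc_last (i : Fin d) :
    signFixMat S p l i.castSucc (Fin.last d') = if i = p then S p l else 0 := by
  simp [signFixMat, Fin.val_eq_val]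

lemma signFixMat_last_castSucc (j : Fin d') :
    signFixMat S p l (Fin.last d) j.castSucc = if j = l then 1 else 0 := by
  simp [signFixMat, Fin.val_eq_val]

lemma signFixMat_last_last : signFixMat S p l (Fin.last d) (Fin.last d') = -1 := by
  simp [signFixMat]

variable (w : Fin d' → ℝ) (c : ℝ)

lemma signFixMat_mulVec_snoc_castSucc (i : Fin d) :
    (signFixMat S p l *ᵥ Fin.snoc w c) i.castSucc =
      (S *ᵥ w) i + if i = p then S p l * (c - w l) else 0 := by
  simp only [Matrix.mulVec, dotProduct, Fin.sum_univ_castSucc, Fin.snoc_castSucc, Fin.snoc_last,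
    signFixMat_castSucc_castSucc, signFixMat_castSucc_last, sub_mul, Finset.sum_sub_distrib]
  split_ifs with h <;> simp [h]
  ring

lemma signFixMat_mulVec_snoc_last :
    (signFixMat S p l *ᵥ Fin.snoc w c) (Fin.last d) = w l - c := by
  simp [Matrix.mulVec, dotProduct, Fin.sum_univ_castSucc, signFixMat_last_castSucc,
    signFixMat_last_last, sub_eq_add_neg]

lemma signFixMat_mulVec_snoc_eq_zero_iff :
    signFixMat S p l *ᵥ Fin.snoc w c = 0 ↔ S *ᵥ w = 0 ∧ c = w l := by
  simp only [funext_iff, Fin.forall_fin_succ', signFixMat_mulVec_snoc_castSucc,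
    signFixMat_mulVec_snoc_last, Pi.zero_apply, sub_eq_zero]
  constructor
  · rintro ⟨hrows, hlast⟩
    exact ⟨fun i => by simpa [hlast] using hrows i, hlast.symm⟩
  · rintro ⟨hSw, rfl⟩
    exact ⟨fun i => by simp [hSw], rfl⟩

end

theorem signFix_equilibria_general {d d' : ℕ} (S : Matrix (Fin d) (Fin d') ℝ)
    (p : Fin d) (l : Fin d')
    (v : (Fin d → ℝ) → (Fin d' → ℝ)) (k : ℝ) :
    ∀ (x : Fin d → ℝ) (xInf : ℝ), (∀ a, 0 < x a) → 0 < xInf →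
      ((signFixMat S p l).mulVec (Fin.snoc (v x) (k * xInf)) = 0 ↔
        (S.mulVec (v x) = 0 ∧ k * xInf = v x l)) :=
  fun x xInf _ _ => signFixMat_mulVec_snoc_eq_zero_iff S p l (v x) (k * xInf)

/-- Equilibria of the original CRN and of its sign fixed CRN correspond: with
fluxes `v̌(x, x_∞) = (v(x), k·x_∞)`, one has `Š v̌(x, x_∞) = 0` iff `S v(x) = 0`
and `k·x_∞ = v(x)_l`; in particular `x ↦ (x, v(x)_l / k)` is the bijection on
positive equilibria. -/
theorem signFix_equilibria {d d' : ℕ} (S : Matrix (Fin d) (Fin d') ℝ)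
    (p : Fin d) (l : Fin d') (hpl : 0 < S p l)
    (v : (Fin d → ℝ) → (Fin d' → ℝ)) (k : ℝ) (hk : 0 < k)
    (hv : ∀ x : Fin d → ℝ, (∀ a, 0 < x a) → ∀ j, 0 < v x j) :
    ∀ (x : Fin d → ℝ) (xInf : ℝ), (∀ a, 0 < x a) → 0 < xInf →
      ((signFixMat S p l).mulVec (Fin.snoc (v x) (k * xInf)) = 0 ↔
        (S.mulVec (v x) = 0 ∧ k * xInf = v x l)) :=
  signFix_equilibria_general S p l v k
end

section
/- Let J be a real d×d stable matrix (all eigenvalues have negative real part) and let J̌_k be the (d+1)×(d+1) matrix from the sign fixing construction with rate constant k. Then for all sufficiently large k, J̌_k is stable; conversely if J has an eigenvalue with positive real part then J̌_k is unstable for all sufficiently large k. -/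
open Matrix Polynomial

/-- The Jacobian of the sign fixed CRN: rows `0, …, n-1` are those of `J` with a
zero appended; row `n` (the last row of `J`) is `(J_{n,·} - s·w, k·s)`; the new
row `n+1` is `(w, -k)`. -/
def signFixJac {n : ℕ} (J : Matrix (Fin (n + 1)) (Fin (n + 1)) ℝ)
    (s k : ℝ) (w : Fin (n + 1) → ℝ) :
    Matrix (Fin (n + 2)) (Fin (n + 2)) ℝ :=
  Matrix.of fun i j =>
    if hi : (i : ℕ) < n + 1 then
      if hj : (j : ℕ) < n + 1 then
        J ⟨i, hi⟩ ⟨j, hj⟩ - (if (i : ℕ) = n then s * w ⟨j, hj⟩ else 0)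
      else (if (i : ℕ) = n then k * s else 0)
    else
      if hj : (j : ℕ) < n + 1 then w ⟨j, hj⟩ else -k

/-- The characteristic-type polynomial `det (M - λ·I)` of a square matrix. -/
noncomputable def detLam {m : ℕ} (M : Matrix (Fin m) (Fin m) ℝ) : Polynomial ℝ :=
  (M.map Polynomial.C - (Polynomial.X : Polynomial ℝ) • (1 : Matrix (Fin m) (Fin m) (Polynomial ℝ))).det

/-- A real square matrix is stable if every complex eigenvalue (root of its
characteristic polynomial over `ℂ`) has strictly negative real part. -/
def IsStableMat {m : ℕ} (M : Matrix (Fin m) (Fin m) ℝ) : Prop :=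
  ∀ z ∈ (M.map (algebraMap ℝ ℂ)).charpoly.roots, z.re < 0

/-! Expanding `det (X - J̌_k)` along its last column gives `χ(J̌_k) = (X + k) χ(J) + s X h`, where
`h` is `det (X - J)` with its last row replaced by `w`, so that `deg (X h) ≤ deg χ(J)`.

If `J` is stable, `X h / χ(J)` is bounded on the closed right half-plane while `|z + k| ≥ k` there,
so for large `k` no root of `χ(J̌_k)` lies in that half-plane.

If `χ(J)(z) = 0` with `a = re z > 0`, then `χ(J̌_k)(z) = s z h(z)` does not depend on `k`.
Were `J̌_k` stable, with eigenvalues `r_0, …, r_d` whose real parts sum to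
`tr J̌_k = tr J - s w_d - k`, we would get
`|χ(J̌_k)(z)| = ∏ |z - r_i| ≥ ∏ (a - re r_i) ≥ a ^ d (a + k - tr J + s w_d)`,
which is unbounded in `k`. -/

open Filter Bornology

lemma Multiset.pow_card_mul_add_sum_map_le_mul_prod_map {ι R : Type*} [CommRing R]
    [PartialOrder R] [IsOrderedRing R] {a : R} (ha : 0 ≤ a) (s : Multiset ι) {f : ι → R}
    (hf : ∀ i ∈ s, 0 ≤ f i) :
    a ^ Multiset.card s * (a + (s.map f).sum) ≤ a * (s.map fun i => a + f i).prod := by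
  induction s using Multiset.induction_on with
  | empty => simp
  | cons i s ih =>
    have hi : 0 ≤ f i := hf i (Multiset.mem_cons_self i s)
    have hs : 0 ≤ (s.map f).sum :=
      Multiset.sum_nonneg fun x hx => by
        obtain ⟨j, hj, rfl⟩ := Multiset.mem_map.1 hx
        exact hf j (Multiset.mem_cons_of_mem hj)
    have ih := ih fun j hj => hf j (Multiset.mem_cons_of_mem hj)
    simp only [Multiset.card_cons, Multiset.map_cons, Multiset.sum_cons, Multiset.prod_cons]
    calc a ^ (Multiset.card s + 1) * (a + (f i + (s.map f).sum))
        ≤ (a + f i) * (a ^ Multiset.card s * (a + (s.map f).sum)) := by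
          have : 0 ≤ f i * a ^ Multiset.card s * (s.map f).sum :=
            mul_nonneg (mul_nonneg hi (pow_nonneg ha _)) hs
          linear_combination this
      _ ≤ (a + f i) * (a * (s.map fun i => a + f i).prod) := by gcongr
      _ = a * ((a + f i) * (s.map fun i => a + f i).prod) := by ring

lemma exists_norm_eval_le_mul_norm_eval {𝕜 : Type*} [NormedField 𝕜] [ProperSpace 𝕜]
    {P Q : 𝕜[X]} (hdeg : P.degree ≤ Q.degree) {S : Set 𝕜} (hS : IsClosed S)
    (hQ : ∀ z ∈ S, Q.eval z ≠ 0) : ∃ M, ∀ z ∈ S, ‖P.eval z‖ ≤ M * ‖Q.eval z‖ := by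
  obtain ⟨c, hc⟩ := (isBigO_cobounded_of_degree_le hdeg).bound
  set B := {z | ‖P.eval z‖ ≤ c * ‖Q.eval z‖}ᶜ
  have hK : IsCompact (closure B ∩ S) :=
    (isBounded_def.2 (by rw [compl_compl]; exact hc)).isCompact_closure.inter_right hS
  have hcont : ContinuousOn (fun z => P.eval z / Q.eval z) (closure B ∩ S) :=
    P.continuousOn.div Q.continuousOn fun z hz => hQ z hz.2
  obtain ⟨C', hC'⟩ := hK.exists_bound_of_continuousOn hcont
  refine ⟨max c C', fun z hz => ?_⟩
  by_cases hzB : z ∈ B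
  · have h := hC' z ⟨subset_closure hzB, hz⟩
    rw [norm_div, div_le_iff₀ (norm_pos_iff.2 (hQ z hz))] at h
    exact h.trans (mul_le_mul_of_nonneg_right (le_max_right _ _) (norm_nonneg _))
  · exact (not_not.1 hzB).trans (mul_le_mul_of_nonneg_right (le_max_left _ _) (norm_nonneg _))

lemma eventually_eval_ne_zero_of_re_nonneg {p q : ℂ[X]} (hdeg : (X * q).degree ≤ p.degree)
    (hp : ∀ z : ℂ, 0 ≤ z.re → p.eval z ≠ 0) :
    ∀ᶠ k : ℝ in atTop, ∀ z : ℂ, 0 ≤ z.re → ((X + C (k : ℂ)) * p + X * q).eval z ≠ 0 := by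
  obtain ⟨M, hM⟩ := exists_norm_eval_le_mul_norm_eval hdeg
    (isClosed_le continuous_const Complex.continuous_re) hp
  filter_upwards [eventually_gt_atTop M, eventually_ge_atTop 0] with k hkM hk0 z hz hroot
  have hpz : 0 < ‖p.eval z‖ := norm_pos_iff.2 (hp z hz)
  have hk : k ≤ ‖z + k‖ := by
    simpa using (Complex.re_le_norm (z + k)).trans' (by simp [hz] : k ≤ (z + k).re)
  have hnorm : ‖z + k‖ * ‖p.eval z‖ = ‖(X * q).eval z‖ := by
    rw [eval_add, add_eq_zero_iff_eq_neg, eval_mul, eval_add, eval_X, eval_C] at hroot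
    rw [← norm_mul, hroot, norm_neg]
  have := hM z hz
  nlinarith

lemma re_pow_natDegree_mul_sub_sum_re_roots_le {χ : ℂ[X]} (hχ : χ.Monic) {z : ℂ}
    (hz : 0 < z.re) (hroots : ∀ r ∈ χ.roots, r.re < 0) :
    z.re ^ χ.natDegree * (z.re - (χ.roots.map Complex.re).sum) ≤ z.re * ‖χ.eval z‖ := by
  have hsplit : χ.Splits := IsAlgClosed.splits χ
  have hnorm : ‖χ.eval z‖ = (χ.roots.map fun r => ‖z - r‖).prod := by
    rw [hsplit.eval_eq_prod_roots_of_monic hχ]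
    simpa [Multiset.map_map] using map_multiset_prod (normHom : ℂ →*₀ ℝ) (χ.roots.map (z - ·))
  have key := Multiset.pow_card_mul_add_sum_map_le_mul_prod_map hz.le χ.roots
    (f := fun r => -r.re) fun r hr => (neg_pos.2 (hroots r hr)).le
  rw [Multiset.sum_map_neg, ← sub_eq_add_neg] at key
  rw [← splits_iff_card_roots.1 hsplit]
  refine key.trans (mul_le_mul_of_nonneg_left ?_ hz.le)
  rw [hnorm]
  refine Multiset.prod_map_le_prod_map₀ _ _ (fun r hr => ?_) fun r _ => ?_
  · linarith [hroots r hr]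
  · simpa [← sub_eq_add_neg] using Complex.re_le_norm (z - r)

noncomputable def charpolyUpdateLastRow {R : Type*} [CommRing R] {n : ℕ}
    (J : Matrix (Fin (n + 1)) (Fin (n + 1)) R) (w : Fin (n + 1) → R) : R[X] :=
  ((charmatrix J).updateRow (Fin.last n) fun j => C (w j)).det

lemma natDegree_charpolyUpdateLastRow_le {R : Type*} [CommRing R] {n : ℕ}
    (J : Matrix (Fin (n + 1)) (Fin (n + 1)) R) (w : Fin (n + 1) → R) :
    (charpolyUpdateLastRow J w).natDegree ≤ n := by
  set A := (1 : Matrix (Fin (n + 1)) (Fin (n + 1)) R).updateRow (Fin.last n) 0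
  set B := (-J).updateRow (Fin.last n) w
  have hsplit : ((charmatrix J).updateRow (Fin.last n) fun j => C (w j)) =
      (X : R[X]) • A.map C + B.map C := by
    ext i j : 1
    by_cases hi : i = Fin.last n
    · subst hi; simp [A, B]
    · by_cases hij : i = j
      · subst hij; simp [A, B, hi]; ring
      · simp [A, B, hi, hij]
  have hdeg := natDegree_det_X_add_C_le A B
  have htop := coeff_det_X_add_C_card A B
  have hA : A.det = 0 := det_eq_zero_of_row_eq_zero (Fin.last n) (by simp [A])
  rw [Fintype.card_fin] at hdeg htop
  rw [hA] at htop
  rw [charpolyUpdateLastRow, hsplit]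
  exact natDegree_le_pred hdeg htop

section SignFixJac

variable {n : ℕ} (J : Matrix (Fin (n + 1)) (Fin (n + 1)) ℝ) (s k : ℝ) (w : Fin (n + 1) → ℝ)

@[simp]
lemma signFixJac_castSucc_castSucc (i j : Fin (n + 1)) :
    signFixJac J s k w i.castSucc j.castSucc = J i j - if i = Fin.last n then s * w j else 0 := by
  simp [signFixJac, Fin.ext_iff, Fin.is_le]

@[simp]
lemma signFixJac_castSucc_last (i : Fin (n + 1)) :
    signFixJac J s k w i.castSucc (Fin.last (n + 1)) = if i = Fin.last n then k * s else 0 := by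
  simp [signFixJac, Fin.ext_iff, Fin.is_le]

@[simp]
lemma signFixJac_last_castSucc (j : Fin (n + 1)) :
    signFixJac J s k w (Fin.last (n + 1)) j.castSucc = w j := by
  simp [signFixJac, Fin.is_le]

@[simp]
lemma signFixJac_last_last : signFixJac J s k w (Fin.last (n + 1)) (Fin.last (n + 1)) = -k := by
  simp [signFixJac]

lemma trace_signFixJac : (signFixJac J s k w).trace = J.trace - s * w (Fin.last n) - k := by
  simp [Matrix.trace, Fin.sum_univ_castSucc (n := n + 1), Finset.sum_sub_distrib]
  ring

lemma charmatrix_signFixJac_submatrix_castSucc :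
    (charmatrix (signFixJac J s k w)).submatrix Fin.castSucc Fin.castSucc =
      (charmatrix J).updateRow (Fin.last n)
        (charmatrix J (Fin.last n) + C s • fun j => C (w j)) := by
  ext i j : 1
  by_cases hi : i = Fin.last n
  · subst hi
    by_cases hij : Fin.last n = j
    · subst hij; simp; ring
    · simp [hij]; ring
  · by_cases hij : i = j
    · subst hij; simp [hi]
    · simp [hi, hij]

lemma charmatrix_signFixJac_submatrix_succAbove :
    (charmatrix (signFixJac J s k w)).submatrix (Fin.last n).castSucc.succAbove Fin.castSucc =
      (charmatrix J).updateRow (Fin.last n) (-fun j => C (w j)) := by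
  ext i j : 1
  by_cases hi : i = Fin.last n
  · subst hi
    simp [charmatrix_apply_ne _ _ _ (Fin.castSucc_lt_last _).ne']
  · have hlt : i < Fin.last n := Fin.lt_last_iff_ne_last.2 hi
    by_cases hij : i = j
    · subst hij; simp [hi, Fin.succAbove_castSucc_of_lt _ _ hlt]
    · simp [hi, hij, Fin.succAbove_castSucc_of_lt _ _ hlt]

lemma charpoly_signFixJac :
    (signFixJac J s k w).charpoly =
      (X + C k) * J.charpoly + C s * X * charpolyUpdateLastRow J w := by
  rw [charpoly, det_succ_column _ (Fin.last (n + 1)), Fin.sum_univ_castSucc,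
    Fintype.sum_eq_single (Fin.last n)]
  · rw [Fin.succAbove_last, charmatrix_signFixJac_submatrix_castSucc,
      charmatrix_signFixJac_submatrix_succAbove]
    have hodd : (-1 : ℝ[X]) ^ (n + (n + 1)) = -1 := Odd.neg_one_pow ⟨n, by ring⟩
    have heven : (-1 : ℝ[X]) ^ (n + 1 + (n + 1)) = 1 := Even.neg_one_pow ⟨n + 1, rfl⟩
    rw [det_updateRow_add, det_updateRow_smul, updateRow_eq_self,
      ← neg_one_smul ℝ[X] fun j => C (w j), det_updateRow_smul]
    simp only [Fin.val_castSucc, Fin.val_last, hodd, heven, charpoly, charpolyUpdateLastRow,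
      charmatrix_apply_ne _ _ _ (Fin.castSucc_lt_last _).ne, charmatrix_apply_eq,
      signFixJac_castSucc_last, signFixJac_last_last, if_true, C_mul, C_neg]
    ring
  · intro i hi
    simp [hi]

lemma charpoly_map_signFixJac :
    ((signFixJac J s k w).map (algebraMap ℝ ℂ)).charpoly =
      (X + C (k : ℂ)) * (J.map (algebraMap ℝ ℂ)).charpoly +
        X * (C (s : ℂ) * (charpolyUpdateLastRow J w).map (algebraMap ℝ ℂ)) := by
  rw [charpoly_map, charpoly_signFixJac, charpoly_map]
  simp only [Polynomial.map_add, Polynomial.map_mul, map_X, map_C, Complex.coe_algebraMap]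
  ring

lemma eventually_isStableMat_signFixJac (hJ : IsStableMat J) :
    ∀ᶠ k in atTop, IsStableMat (signFixJac J s k w) := by
  set p := (J.map (algebraMap ℝ ℂ)).charpoly
  set q := C (s : ℂ) * (charpolyUpdateLastRow J w).map (algebraMap ℝ ℂ)
  have hdeg : (X * q).degree ≤ p.degree := by
    rw [degree_eq_natDegree (charpoly_monic _).ne_zero, charpoly_natDegree_eq_dim,
      Fintype.card_fin]
    refine degree_le_of_natDegree_le (natDegree_mul_le.trans ?_)
    have hq : q.natDegree ≤ n := (natDegree_C_mul_le _ _).trans <|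
      natDegree_map_le.trans (natDegree_charpolyUpdateLastRow_le J w)
    simp only [natDegree_X]
    omega
  have hp : ∀ z : ℂ, 0 ≤ z.re → p.eval z ≠ 0 := fun z hz hpz =>
    (hJ z ((mem_roots (charpoly_monic _).ne_zero).2 hpz)).not_ge hz
  filter_upwards [eventually_eval_ne_zero_of_re_nonneg hdeg hp] with k hk z hz
  by_contra hre
  refine hk z (not_lt.1 hre) ?_
  rw [← charpoly_map_signFixJac]
  exact (mem_roots (charpoly_monic _).ne_zero).1 hz

lemma eventually_not_isStableMat_signFixJac {z : ℂ}
    (hz : z ∈ (J.map (algebraMap ℝ ℂ)).charpoly.roots) (hre : 0 < z.re) :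
    ∀ᶠ k in atTop, ¬ IsStableMat (signFixJac J s k w) := by
  set a := z.re
  set v := z * (C (s : ℂ) * (charpolyUpdateLastRow J w).map (algebraMap ℝ ℂ)).eval z
  set T := J.trace - s * w (Fin.last n)
  have heval : ∀ k : ℝ, ((signFixJac J s k w).map (algebraMap ℝ ℂ)).charpoly.eval z = v := by
    intro k
    have hpz : (J.map (algebraMap ℝ ℂ)).charpoly.eval z = 0 :=
      (mem_roots (charpoly_monic _).ne_zero).1 hz
    rw [charpoly_map_signFixJac, eval_add, eval_mul, hpz, mul_zero, zero_add, eval_mul, eval_X]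
  have hsum : ∀ k : ℝ,
      (((signFixJac J s k w).map (algebraMap ℝ ℂ)).charpoly.roots.map Complex.re).sum = T - k := by
    intro k
    have htrace : ((signFixJac J s k w).map (algebraMap ℝ ℂ)).trace =
        (signFixJac J s k w).trace := by
      simp [Matrix.trace]
    rw [← Complex.coe_reAddGroupHom, ← map_multiset_sum, Complex.coe_reAddGroupHom,
      ← trace_eq_sum_roots_charpoly, htrace, Complex.ofReal_re, trace_signFixJac]
  filter_upwards [eventually_gt_atTop (‖v‖ / a ^ (n + 1) + T)] with k hk hstable
  have key := re_pow_natDegree_mul_sub_sum_re_roots_le (charpoly_monic _) hre hstable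
  rw [charpoly_natDegree_eq_dim, Fintype.card_fin, hsum, heval] at key
  have hv : ‖v‖ < (a - (T - k)) * a ^ (n + 1) := by
    rw [← div_lt_iff₀ (pow_pos hre _)]
    linarith
  have := mul_lt_mul_of_pos_left hv hre
  rw [pow_succ] at key
  linarith

end SignFixJac

/-- If `J` is stable then the sign fixed Jacobian `J̌_k` is stable for all
sufficiently large `k`; conversely, if `J` has an eigenvalue with positive real
part then `J̌_k` is unstable for all sufficiently large `k`. -/
theorem signFixJac_stability {n : ℕ}
    (J : Matrix (Fin (n + 1)) (Fin (n + 1)) ℝ) (s : ℝ) (w : Fin (n + 1) → ℝ) :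
    (IsStableMat J → ∃ K : ℝ, ∀ k : ℝ, K ≤ k → IsStableMat (signFixJac J s k w)) ∧
    ((∃ z ∈ (J.map (algebraMap ℝ ℂ)).charpoly.roots, 0 < z.re) →
      ∃ K : ℝ, ∀ k : ℝ, K ≤ k → ¬ IsStableMat (signFixJac J s k w)) :=
  ⟨fun hJ => eventually_atTop.1 (eventually_isStableMat_signFixJac J s w hJ),
    fun ⟨_, hz, hre⟩ => eventually_atTop.1 (eventually_not_isStableMat_signFixJac J s w hz hre)⟩
end

section
/- Let S₁ be a stoichiometric matrix with a bad submatrix and S₂ its sign fixing matrix with respect to that bad submatrix. Then the deficiencies satisfy 0 ≤ δ₂ - δ₁ ≤ 1, where δᵢ = nᵢ - ℓᵢ - sᵢ. -/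
open Finset

/-- A chemical reaction network on a species set `σ`: a finite set of
reactions, each a pair (source complex, target complex), complexes being
formal `ℕ`-linear combinations of species. -/
structure CRN (σ : Type) [DecidableEq σ] where
  reactions : Finset ((σ → ℕ) × (σ → ℕ))

variable {σ : Type} [DecidableEq σ] [Fintype σ]

/-- The set of complexes of a CRN. -/
def CRN.complexes (R : CRN σ) : Finset (σ → ℕ) :=
  R.reactions.image Prod.fst ∪ R.reactions.image Prod.snd

/-- `n`, the number of complexes. -/
def CRN.numComplexes (R : CRN σ) : ℕ := R.complexes.card

/-- The undirected graph on complexes whose edges are the reactions. -/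
def CRN.linkGraph (R : CRN σ) : SimpleGraph {c // c ∈ R.complexes} :=
  SimpleGraph.fromRel (fun a b => ((a : σ → ℕ), (b : σ → ℕ)) ∈ R.reactions)

/-- `ℓ`, the number of linkage classes (connected components of the graph on
complexes). -/
noncomputable def CRN.numLinkage (R : CRN σ) : ℕ :=
  Nat.card (R.linkGraph.ConnectedComponent)

/-- `s`, the rank of the stoichiometric matrix, i.e. the dimension of the span
of the reaction vectors. -/
noncomputable def CRN.srank (R : CRN σ) : ℕ :=
  Module.finrank ℝ (Submodule.span ℝ
    { v : σ → ℝ | ∃ r ∈ R.reactions, v = fun i => (r.2 i : ℝ) - (r.1 i : ℝ) })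

/-- The topological deficiency `δ = n - ℓ - s`. -/
noncomputable def CRN.deficiency (R : CRN σ) : ℤ :=
  (R.numComplexes : ℤ) - R.numLinkage - R.srank

/-- The complex `p • A` consisting of `p` copies of the single species `A`. -/
def mono (A : σ) (p : ℕ) : σ → ℕ := fun i => if i = A then p else 0

/-- Extend a complex by zero at the new species `B' = none`. -/
def extC (y : σ → ℕ) : Option σ → ℕ
  | none => 0
  | some i => y i

/-- The complex `B' + C₂`, where `B' = none` is the new species. -/
def extB' (C₂ : σ → ℕ) : Option σ → ℕ
  | none => 1
  | some i => C₂ i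

/-- The complex consisting of the new species `B'` alone. -/
def bPrime : Option σ → ℕ
  | none => 1
  | some _ => 0

/-- One step of the sign fixing algorithm on the CRN level: the reaction
`p₁A + C₁ → p₂B + C₂` is replaced by `p₁A + C₁ → B' + C₂` for a new species
`B'`, the reaction `B' → p₂B` is added, and all other reactions are kept. -/
def signFixCRN (R : CRN σ) (A B : σ) (p₁ p₂ : ℕ) (C₁ C₂ : σ → ℕ) :
    CRN (Option σ) :=
  ⟨((R.reactions.erase
        ((fun i => mono A p₁ i + C₁ i), (fun i => mono B p₂ i + C₂ i))).image
      (fun r => (extC r.1, extC r.2))) ∪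
    {(extC (fun i => mono A p₁ i + C₁ i), extB' C₂), (bPrime, extC (mono B p₂))}⟩

/-!
Write `δ = (n - ℓ) - s`, where `n - ℓ` is the number of vertices minus the number of connected
components of the graph of complexes. The rank `s` grows by exactly one: `B' + C₂ - x₁` is the
only reaction vector with a nonzero `B'`-coordinate, and `p₂B - B' = (x₂ - x₁) - (B' + C₂ - x₁)`
where `x₁ = p₁A + C₁`, `x₂ = p₂B + C₂`.

For the graph, if `C₂ = 0` the edge `x₁ — x₂` is subdivided by the new vertex `B'`, which raises
`n - ℓ` by one. Otherwise the edge `x₁ — x₂` disappears, changing `n - ℓ` by `0` or `-1` (isolated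
vertices do not count), and two pendant vertices `B' + C₂` (at `x₁`) and `B'` (at `p₂B`) appear,
each raising `n - ℓ` by one. Either way `n - ℓ` grows by one or two, so `δ` grows by zero or one.
-/

open SimpleGraph

namespace SimpleGraph

variable {V W : Type*} {G : SimpleGraph V} {G' : SimpleGraph W}

theorem Reachable.map_of_forall_adj (f : V → W)
    (hf : ∀ a b, G.Adj a b → G'.Reachable (f a) (f b)) {u v : V} (h : G.Reachable u v) :
    G'.Reachable (f u) (f v) := by
  rw [reachable_iff_reflTransGen] at h ⊢
  exact Relation.ReflTransGen.lift' f
    (fun a b hab => (reachable_iff_reflTransGen _ _).mp (hf a b hab)) _ _ h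

theorem Reachable.eq_of_forall_adj {β : Type*} {f : V → β} (hf : ∀ a b, G.Adj a b → f a = f b)
    {u v : V} (h : G.Reachable u v) : f u = f v :=
  reachable_bot.mp (h.map_of_forall_adj f fun a b hab => reachable_bot.mpr (hf a b hab))

theorem card_connectedComponent_eq_of_reachable_maps (f : V → W) (g : W → V)
    (hf : ∀ a b, G.Adj a b → G'.Reachable (f a) (f b))
    (hg : ∀ a b, G'.Adj a b → G.Reachable (g a) (g b))
    (hgf : ∀ v, G.Reachable (g (f v)) v) (hfg : ∀ w, G'.Reachable (f (g w)) w) :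
    Nat.card G.ConnectedComponent = Nat.card G'.ConnectedComponent :=
  Nat.card_congr
    { toFun := Quot.lift (fun v => G'.connectedComponentMk (f v))
        fun _ _ h => ConnectedComponent.sound (h.map_of_forall_adj f hf)
      invFun := Quot.lift (fun w => G.connectedComponentMk (g w))
        fun _ _ h => ConnectedComponent.sound (h.map_of_forall_adj g hg)
      left_inv := ConnectedComponent.ind fun v => ConnectedComponent.sound (hgf v)
      right_inv := ConnectedComponent.ind fun w => ConnectedComponent.sound (hfg w) }

theorem reachable_sup_edge (G : SimpleGraph V) (u v : V) : (G ⊔ edge u v).Reachable u v := by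
  rcases eq_or_ne u v with rfl | huv
  · rfl
  · exact Adj.reachable (Or.inr ((edge_adj ..).mpr ⟨Or.inl ⟨rfl, rfl⟩, huv⟩))

theorem card_connectedComponent_sup_edge_congr {u v w : V} (hvw : G.Reachable v w) :
    Nat.card (G ⊔ edge u v).ConnectedComponent = Nat.card (G ⊔ edge u w).ConnectedComponent := by
  have key : ∀ {v w}, G.Reachable v w → ∀ a b, (G ⊔ edge u v).Adj a b →
      (G ⊔ edge u w).Reachable a b := by
    intro v w hvw a b hab
    have hmono := fun {x y} (h : G.Reachable x y) => h.mono (le_sup_left : G ≤ G ⊔ edge u w)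
    rcases hab with hab | hab
    · exact hmono hab.reachable
    · obtain ⟨⟨rfl, rfl⟩ | ⟨rfl, rfl⟩, -⟩ := (edge_adj ..).mp hab
      · exact (reachable_sup_edge G _ _).trans (hmono hvw.symm)
      · exact (hmono hvw).trans (reachable_sup_edge G _ _).symm
  exact card_connectedComponent_eq_of_reachable_maps id id (key hvw) (key hvw.symm)
    (fun _ => .rfl) (fun _ => .rfl)

theorem card_connectedComponent_le_sup_edge_add_one [Finite V] (G : SimpleGraph V) (u v : V) :
    Nat.card G.ConnectedComponent ≤ Nat.card (G ⊔ edge u v).ConnectedComponent + 1 := by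
  classical
  -- merging the component of `v` into that of `u` is constant along the new edge and misses
  -- only the component of `v`
  let c : V → G.ConnectedComponent := fun w =>
    if G.connectedComponentMk w = G.connectedComponentMk v then G.connectedComponentMk u
    else G.connectedComponentMk w
  have hc : ∀ a b, (G ⊔ edge u v).Adj a b → c a = c b := by
    rintro a b (hab | hab)
    · simp only [c, ConnectedComponent.eq.mpr hab.reachable]
    · obtain ⟨⟨rfl, rfl⟩ | ⟨rfl, rfl⟩, -⟩ := (edge_adj ..).mp hab <;> simp [c]
  let c' := ConnectedComponent.lift c fun _ _ p _ => Reachable.eq_of_forall_adj hc ⟨p⟩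
  have hsurj : Function.Surjective fun o => Option.elim o (G.connectedComponentMk v) c' := by
    refine ConnectedComponent.ind fun w => ?_
    by_cases hw : G.connectedComponentMk w = G.connectedComponentMk v
    · exact ⟨none, hw.symm⟩
    · exact ⟨some ((G ⊔ edge u v).connectedComponentMk w), if_neg hw⟩
  simpa using Nat.card_le_card_of_surjective _ hsurj

end SimpleGraph

section relGraph

variable {τ τ' : Type*}

def endpoints [DecidableEq τ] (E : Finset (τ × τ)) : Finset τ :=
  E.image Prod.fst ∪ E.image Prod.snd

theorem fst_mem_endpoints [DecidableEq τ] {E : Finset (τ × τ)} {e : τ × τ} (he : e ∈ E) :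
    e.1 ∈ endpoints E :=
  mem_union_left _ (mem_image_of_mem _ he)

theorem snd_mem_endpoints [DecidableEq τ] {E : Finset (τ × τ)} {e : τ × τ} (he : e ∈ E) :
    e.2 ∈ endpoints E :=
  mem_union_right _ (mem_image_of_mem _ he)

theorem mem_of_endpoints_subset [DecidableEq τ] {V : Finset τ} {E : Finset (τ × τ)}
    (hE : endpoints E ⊆ V) {x y : τ} (h : (x, y) ∈ E) : x ∈ V ∧ y ∈ V :=
  ⟨hE (fst_mem_endpoints h), hE (snd_mem_endpoints h)⟩

theorem endpoints_insert [DecidableEq τ] (a b : τ) (E : Finset (τ × τ)) :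
    endpoints (insert (a, b) E) = insert a (insert b (endpoints E)) := by
  ext x; simp only [endpoints, image_insert, mem_union, mem_insert]; tauto

theorem endpoints_image [DecidableEq τ] [DecidableEq τ'] (f : τ → τ') (E : Finset (τ × τ)) :
    endpoints (E.image (Prod.map f f)) = (endpoints E).image f := by
  simp [endpoints, image_union, image_image, Function.comp_def]

def relGraph (V : Finset τ) (E : Finset (τ × τ)) : SimpleGraph V :=
  SimpleGraph.fromRel fun a b => ((a : τ), (b : τ)) ∈ E

theorem relGraph_adj {V : Finset τ} {E : Finset (τ × τ)} {a b : V} :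
    (relGraph V E).Adj a b ↔ (a : τ) ≠ b ∧ (((a : τ), (b : τ)) ∈ E ∨ ((b : τ), (a : τ)) ∈ E) := by
  simp [relGraph]

noncomputable def linkRankOn (V : Finset τ) (E : Finset (τ × τ)) : ℤ :=
  V.card - Nat.card (relGraph V E).ConnectedComponent

theorem card_connectedComponent_relGraph_image [DecidableEq τ'] {V : Finset τ}
    {E : Finset (τ × τ)} {f : τ → τ'} (hf : Function.Injective f) :
    Nat.card (relGraph (V.image f) (E.image (Prod.map f f))).ConnectedComponent =
      Nat.card (relGraph V E).ConnectedComponent := by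
  have hmem : ∀ x y, (f x, f y) ∈ E.image (Prod.map f f) ↔ (x, y) ∈ E := fun x y =>
    (hf.prodMap hf).mem_finset_image (a := (x, y))
  let φ : relGraph V E ≃g relGraph (V.image f) (E.image (Prod.map f f)) :=
    { toEquiv := Equiv.ofBijective (fun a => ⟨f a, mem_image_of_mem f a.2⟩)
        ⟨fun a b h => Subtype.ext (hf (congrArg Subtype.val h)), fun b => by
          obtain ⟨a, ha, hab⟩ := mem_image.mp b.2
          exact ⟨⟨a, ha⟩, Subtype.ext hab⟩⟩
      map_rel_iff' := fun {a b} => by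
        change (relGraph _ _).Adj ⟨f a, _⟩ ⟨f b, _⟩ ↔ _
        simp only [relGraph_adj, hf.ne_iff, hmem] }
  exact (Nat.card_congr φ.connectedComponentEquiv).symm

theorem linkRankOn_image [DecidableEq τ'] {f : τ → τ'} (hf : Function.Injective f)
    (V : Finset τ) (E : Finset (τ × τ)) :
    linkRankOn (V.image f) (E.image (Prod.map f f)) = linkRankOn V E := by
  rw [linkRankOn, linkRankOn, card_image_of_injective V hf,
    card_connectedComponent_relGraph_image hf]

variable [DecidableEq τ] {V : Finset τ} {E : Finset (τ × τ)}

theorem relGraph_insert {x y : τ} (hx : x ∈ V) (hy : y ∈ V) :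
    relGraph V (insert (x, y) E) = relGraph V E ⊔ edge ⟨x, hx⟩ ⟨y, hy⟩ := by
  ext a b
  simp only [sup_adj, edge_adj, relGraph_adj, mem_insert, Prod.ext_iff, Subtype.ext_iff, ne_eq]
  tauto

theorem relGraph_insert_swap (x y : τ) :
    relGraph V (insert (x, y) E) = relGraph V (insert (y, x) E) := by
  ext a b
  simp only [relGraph_adj, mem_insert, Prod.ext_iff]
  tauto

theorem card_connectedComponent_relGraph_insert {v : τ} (hv : v ∉ V) (hE : endpoints E ⊆ V) :
    Nat.card (relGraph (insert v V) E).ConnectedComponent =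
      Nat.card (relGraph V E).ConnectedComponent + 1 := by
  let incl : relGraph V E →g relGraph (insert v V) E :=
    ⟨fun a => ⟨a, mem_insert_of_mem a.2⟩, fun h => by rw [relGraph_adj] at h ⊢; exact h⟩
  let restrict (w : {x // x ∈ insert v V}) : Option (relGraph V E).ConnectedComponent :=
    if h : (w : τ) ∈ V then some ((relGraph V E).connectedComponentMk ⟨w, h⟩) else none
  have hrestrict : ∀ a b, (relGraph (insert v V) E).Adj a b → restrict a = restrict b := by
    intro a b hab
    obtain ⟨hne, hE'⟩ := relGraph_adj.mp hab
    obtain ⟨ha, hb⟩ : (a : τ) ∈ V ∧ (b : τ) ∈ V :=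
      hE'.elim (mem_of_endpoints_subset hE) fun h => (mem_of_endpoints_subset hE h).symm
    simp only [restrict, dif_pos ha, dif_pos hb, Option.some_inj]
    exact ConnectedComponent.sound (Adj.reachable (relGraph_adj.mpr ⟨hne, hE'⟩))
  refine (Nat.card_congr
    { toFun := ConnectedComponent.lift restrict fun _ _ p _ =>
        Reachable.eq_of_forall_adj hrestrict ⟨p⟩
      invFun := fun o => o.elim
        ((relGraph (insert v V) E).connectedComponentMk ⟨v, mem_insert_self v V⟩)
        (ConnectedComponent.map incl)
      left_inv := ?left
      right_inv := ?right }).trans Finite.card_option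
  case left =>
    refine ConnectedComponent.ind fun w => ?_
    by_cases hw : (w : τ) ∈ V
    · simp [restrict, hw, incl]
    · obtain rfl : w = ⟨v, mem_insert_self v V⟩ :=
        Subtype.ext ((mem_insert.mp w.2).resolve_right hw)
      simp [restrict, hv]
  case right =>
    rintro (_ | c)
    · simp [restrict, hv]
    · induction c using ConnectedComponent.ind
      simp [restrict, incl]

theorem card_connectedComponent_relGraph_insert_pendant {u v : τ} (hv : v ∉ V) (hu : u ∈ V)
    (hE : endpoints E ⊆ V) :
    Nat.card (relGraph (insert v V) (insert (v, u) E)).ConnectedComponent =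
      Nat.card (relGraph V E).ConnectedComponent := by
  -- retract the pendant vertex `v` onto its neighbour `u`
  let r (w : {x // x ∈ insert v V}) : {x // x ∈ V} :=
    if h : (w : τ) ∈ V then ⟨w, h⟩ else ⟨u, hu⟩
  have hr : ∀ w : {x // x ∈ insert v V}, (h : (w : τ) ∈ V) → r w = ⟨w, h⟩ := fun _ h => dif_pos h
  have hrv : r ⟨v, mem_insert_self v V⟩ = ⟨u, hu⟩ := by simp [r, hv]
  refine card_connectedComponent_eq_of_reachable_maps r
    (fun a => ⟨a, mem_insert_of_mem a.2⟩) ?_ ?_ ?_ ?_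
  · intro a b hab
    obtain ⟨hne, hab⟩ := relGraph_adj.mp hab
    simp only [mem_insert, Prod.ext_iff] at hab
    rcases hab with (⟨ha, hb⟩ | h) | (⟨hb, ha⟩ | h)
    · have : r a = r b := by simp [r, ha, hb, hv, hu]
      rw [this]
    · rw [hr a (mem_of_endpoints_subset hE h).1, hr b (mem_of_endpoints_subset hE h).2]
      exact Adj.reachable (relGraph_adj.mpr ⟨hne, Or.inl h⟩)
    · have : r a = r b := by simp [r, ha, hb, hv, hu]
      rw [this]
    · rw [hr a (mem_of_endpoints_subset hE h).2, hr b (mem_of_endpoints_subset hE h).1]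
      exact Adj.reachable (relGraph_adj.mpr ⟨hne, Or.inr h⟩)
  · intro a b hab
    refine Adj.reachable ?_
    rw [relGraph_adj] at hab ⊢
    exact ⟨hab.1, hab.2.imp mem_insert_of_mem mem_insert_of_mem⟩
  · intro w
    by_cases hw : (w : τ) ∈ V
    · simp [hr w hw]
    · obtain rfl : w = ⟨v, mem_insert_self v V⟩ :=
        Subtype.ext ((mem_insert.mp w.2).resolve_right hw)
      rw [hrv]
      exact Adj.reachable (relGraph_adj.mpr
        ⟨fun h => hv (by simp only at h; exact h ▸ hu), Or.inr (mem_insert_self _ _)⟩)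
  · intro a
    simp [hr ⟨a, mem_insert_of_mem a.2⟩ a.2]

theorem linkRankOn_insert_of_endpoints_subset (hE : endpoints E ⊆ V) (v : τ) :
    linkRankOn (insert v V) E = linkRankOn V E := by
  by_cases hv : v ∈ V
  · rw [insert_eq_of_mem hv]
  · rw [linkRankOn, linkRankOn, card_insert_of_notMem hv,
      card_connectedComponent_relGraph_insert hv hE]
    push_cast
    ring

theorem linkRankOn_insert_pendant {u v : τ} (hv : v ∉ V) (hu : u ∈ V) (hE : endpoints E ⊆ V) :
    linkRankOn (insert v V) (insert (v, u) E) = linkRankOn V E + 1 := by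
  rw [linkRankOn, linkRankOn, card_insert_of_notMem hv,
    card_connectedComponent_relGraph_insert_pendant hv hu hE]
  push_cast
  ring

theorem linkRankOn_insert_swap (x y : τ) :
    linkRankOn V (insert (x, y) E) = linkRankOn V (insert (y, x) E) := by
  rw [linkRankOn, linkRankOn, relGraph_insert_swap]

theorem linkRankOn_le_insert {x y : τ} (hx : x ∈ V) (hy : y ∈ V) :
    linkRankOn V E ≤ linkRankOn V (insert (x, y) E) := by
  have := ConnectedComponent.card_le_card_of_le
    (le_sup_left : relGraph V E ≤ relGraph V E ⊔ edge ⟨x, hx⟩ ⟨y, hy⟩)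
  rw [linkRankOn, linkRankOn, relGraph_insert hx hy]
  omega

theorem linkRankOn_insert_le {x y : τ} (hx : x ∈ V) (hy : y ∈ V) :
    linkRankOn V (insert (x, y) E) ≤ linkRankOn V E + 1 := by
  have := card_connectedComponent_le_sup_edge_add_one (relGraph V E) ⟨x, hx⟩ ⟨y, hy⟩
  rw [linkRankOn, linkRankOn, relGraph_insert hx hy]
  omega

theorem linkRankOn_insert_insert_redirect {u v w : τ} (hu : u ∈ V) (hv : v ∈ V) (hw : w ∈ V) :
    linkRankOn V (insert (u, v) (insert (v, w) E)) =
      linkRankOn V (insert (v, w) (insert (u, w) E)) := by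
  rw [insert_comm (v, w), linkRankOn, linkRankOn, relGraph_insert hu hv, relGraph_insert hu hw,
    relGraph_insert hv hw, card_connectedComponent_sup_edge_congr (reachable_sup_edge _ _ _)]

end relGraph

section linkRank

variable {τ τ' : Type*} [DecidableEq τ] [DecidableEq τ']

noncomputable def linkRank (E : Finset (τ × τ)) : ℤ :=
  linkRankOn (endpoints E) E

theorem linkRankOn_insert_insert_endpoints (a b : τ) (E : Finset (τ × τ)) :
    linkRankOn (insert a (insert b (endpoints E))) E = linkRank E := by
  rw [linkRankOn_insert_of_endpoints_subset (subset_insert _ _),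
    linkRankOn_insert_of_endpoints_subset Subset.rfl, linkRank]

theorem linkRank_le_insert (a b : τ) (E : Finset (τ × τ)) :
    linkRank E ≤ linkRank (insert (a, b) E) := by
  rw [← linkRankOn_insert_insert_endpoints a b E, linkRank, endpoints_insert]
  exact linkRankOn_le_insert (mem_insert_self _ _) (mem_insert_of_mem (mem_insert_self _ _))

theorem linkRank_insert_le (a b : τ) (E : Finset (τ × τ)) :
    linkRank (insert (a, b) E) ≤ linkRank E + 1 := by
  rw [← linkRankOn_insert_insert_endpoints a b E, linkRank, endpoints_insert]
  exact linkRankOn_insert_le (mem_insert_self _ _) (mem_insert_of_mem (mem_insert_self _ _))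

theorem linkRank_add_pendants_image {f : τ → τ'} (hf : Function.Injective f) {c₀ c₁ : τ'}
    (hc₀ : ∀ x, f x ≠ c₀) (hc₁ : ∀ x, f x ≠ c₁) (hc : c₁ ≠ c₀) (a y : τ) (E : Finset (τ × τ)) :
    linkRank (insert (f a, c₁) (insert (c₀, f y) (E.image (Prod.map f f)))) = linkRank E + 2 := by
  set V := (insert a (insert y (endpoints E))).image f
  have hV : endpoints (insert (f a, c₁) (insert (c₀, f y) (E.image (Prod.map f f)))) =
      insert c₁ (insert c₀ V) := by
    ext x
    simp only [V, endpoints_insert, endpoints_image, image_insert, mem_insert]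
    tauto
  have hE : endpoints (E.image (Prod.map f f)) ⊆ V := by
    rw [endpoints_image]
    exact image_subset_image ((subset_insert _ _).trans (subset_insert _ _))
  rw [linkRank, hV, linkRankOn_insert_swap, linkRankOn_insert_pendant, linkRankOn_insert_pendant,
    linkRankOn_image hf, linkRankOn_insert_insert_endpoints]
  · ring
  · simp [V, hc₀, (hc₀ _).symm]
  · simp [V]
  · exact hE
  · simp [hc, V, hc₁, (hc₁ _).symm]
  · simp [V]
  · rw [endpoints_insert]
    exact insert_subset_insert _ (insert_subset (by simp [V]) hE)

theorem linkRank_subdivide_image {f : τ → τ'} (hf : Function.Injective f) {c : τ'}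
    (hc : ∀ x, f x ≠ c) (a b : τ) (E : Finset (τ × τ)) :
    linkRank (insert (f a, c) (insert (c, f b) (E.image (Prod.map f f)))) =
      linkRank (insert (a, b) E) + 1 := by
  set V := (endpoints (insert (a, b) E)).image f
  have hV : endpoints (insert (f a, c) (insert (c, f b) (E.image (Prod.map f f)))) =
      insert c V := by
    ext x
    simp only [V, endpoints_insert, endpoints_image, image_insert, mem_insert]
    tauto
  have hab : insert (f a, f b) (E.image (Prod.map f f)) =
      (insert (a, b) E).image (Prod.map f f) := by
    rw [image_insert, Prod.map_apply]
  rw [linkRank, hV, linkRankOn_insert_insert_redirect, linkRankOn_insert_pendant, hab,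
    linkRankOn_image hf, linkRank]
  · simp [V, hc]
  · simp [V, endpoints_insert]
  · rw [hab, endpoints_image]
  all_goals simp [V, endpoints_insert]

end linkRank

section LinearAlgebra

theorem Submodule.span_insert_insert_sub {R M : Type*} [Ring R] [AddCommGroup M] [Module R M]
    (w a : M) (s : Set M) :
    span R (insert w (insert (a - w) s)) = span R (insert w (insert a s)) := by
  apply le_antisymm <;> rw [span_le] <;> rintro x (rfl | rfl | hx)
  · exact subset_span (Set.mem_insert _ _)
  · exact sub_mem (subset_span (by simp)) (subset_span (Set.mem_insert _ _))
  · exact subset_span (by simp [hx])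
  · exact subset_span (Set.mem_insert _ _)
  · simpa using add_mem (subset_span (by simp) : x - w ∈ span R (insert w (insert (x - w) s)))
      (subset_span (Set.mem_insert _ _))
  · exact subset_span (by simp [hx])

theorem finrank_span_insert_image {K V W : Type*} [DivisionRing K] [AddCommGroup V] [Module K V]
    [AddCommGroup W] [Module K W] [Module.Finite K W] {f : V →ₗ[K] W} (hf : Function.Injective f)
    {w : W} (hw : w ∉ LinearMap.range f) (s : Set V) :
    Module.finrank K (Submodule.span K (insert w (f '' s))) =
      Module.finrank K (Submodule.span K s) + 1 := by
  have hw' : w ∉ (Submodule.span K s).map f := fun h => hw (LinearMap.map_le_range h)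
  rw [Submodule.span_insert, sup_comm, Submodule.span_image,
    Submodule.finrank_sup_span_singleton hw', (Submodule.equivMapOfInjective f hf _).finrank_eq]

end LinearAlgebra

section SignFix

variable {κ : Type}

theorem extC_injective : Function.Injective (extC (σ := κ)) :=
  fun _ _ h => funext fun i => congrFun h (some i)

theorem extC_ne_of_apply_none_ne_zero {z : Option κ → ℕ} (hz : z none ≠ 0) (y : κ → ℕ) :
    extC y ≠ z :=
  fun h => hz (h ▸ rfl)

theorem extB'_zero : extB' (0 : κ → ℕ) = bPrime := by
  funext o; cases o <;> rfl

theorem extB'_ne_bPrime {C : κ → ℕ} (hC : C ≠ 0) : extB' C ≠ bPrime :=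
  fun h => hC (funext fun i => congrFun h (some i))

def reactionVector (r : (κ → ℕ) × (κ → ℕ)) : κ → ℝ :=
  fun i => (r.2 i : ℝ) - r.1 i

def extCLin : (κ → ℝ) →ₗ[ℝ] Option κ → ℝ where
  toFun v o := o.elim 0 v
  map_add' u v := by funext o; cases o <;> simp
  map_smul' c v := by funext o; cases o <;> simp

theorem extCLin_injective : Function.Injective (extCLin (κ := κ)) :=
  fun _ _ h => funext fun i => congrFun h (some i)

theorem reactionVector_map_extC (r : (κ → ℕ) × (κ → ℕ)) :
    reactionVector (Prod.map extC extC r) = extCLin (reactionVector r) := by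
  funext o; cases o <;> simp [reactionVector, extC, extCLin]

theorem reactionVector_image_map_extC (s : Set ((κ → ℕ) × (κ → ℕ))) :
    reactionVector '' (Prod.map extC extC '' s) = extCLin '' (reactionVector '' s) := by
  simp only [Set.image_image, reactionVector_map_extC]

def stoichSubspace (E : Finset ((κ → ℕ) × (κ → ℕ))) : Submodule ℝ (κ → ℝ) :=
  Submodule.span ℝ (reactionVector '' E)

theorem CRN.srank_eq_finrank_stoichSubspace [DecidableEq κ] (R : CRN κ) :
    R.srank = Module.finrank ℝ (stoichSubspace R.reactions) := by
  have : {v : κ → ℝ | ∃ r ∈ R.reactions, v = fun i => (r.2 i : ℝ) - r.1 i} =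
      reactionVector '' R.reactions :=
    Set.ext fun _ => exists_congr fun _ => and_congr_right fun _ => eq_comm
  rw [CRN.srank, this, stoichSubspace]

theorem CRN.deficiency_eq_linkRank_sub_srank (R : CRN σ) :
    R.deficiency = linkRank R.reactions - R.srank :=
  rfl

def signFixReactions [Fintype κ] (E : Finset ((κ → ℕ) × (κ → ℕ))) (x y C : κ → ℕ) :
    Finset ((Option κ → ℕ) × (Option κ → ℕ)) :=
  insert (extC x, extB' C)
    (insert (bPrime, extC y) ((E.erase (x, y + C)).image (Prod.map extC extC)))

theorem signFixCRN_reactions (R : CRN σ) (A B : σ) (p₁ p₂ : ℕ) (C₁ C₂ : σ → ℕ) :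
    (signFixCRN R A B p₁ p₂ C₁ C₂).reactions =
      signFixReactions R.reactions (fun i => mono A p₁ i + C₁ i) (mono B p₂) C₂ := by
  rw [signFixCRN, union_comm, insert_union, singleton_union]
  rfl

variable [Fintype κ] {E : Finset ((κ → ℕ) × (κ → ℕ))} {x y C : κ → ℕ}

theorem finrank_stoichSubspace_signFixReactions (hr : (x, y + C) ∈ E) :
    Module.finrank ℝ (stoichSubspace (signFixReactions E x y C)) =
      Module.finrank ℝ (stoichSubspace E) + 1 := by
  have hw : reactionVector (extC x, extB' C) ∉ LinearMap.range extCLin := by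
    rintro ⟨v, hv⟩
    simpa [reactionVector, extC, extB', extCLin] using congrFun hv none
  have hB' : reactionVector (bPrime, extC y) =
      extCLin (reactionVector (x, y + C)) - reactionVector (extC x, extB' C) := by
    funext o
    cases o <;> simp [reactionVector, extC, extB', bPrime, extCLin]
  have hE₂ : stoichSubspace (signFixReactions E x y C) = Submodule.span ℝ
      (insert (reactionVector (extC x, extB' C))
        (insert (extCLin (reactionVector (x, y + C)) - reactionVector (extC x, extB' C))
          (extCLin '' (reactionVector '' ↑(E.erase (x, y + C)))))) := by
    simp only [stoichSubspace, signFixReactions, coe_insert, coe_image, Set.image_insert_eq, hB',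
      reactionVector_image_map_extC]
  have hE : stoichSubspace E = Submodule.span ℝ
      (insert (reactionVector (x, y + C)) (reactionVector '' ↑(E.erase (x, y + C)))) := by
    conv_lhs => rw [stoichSubspace, ← insert_erase hr]
    rw [coe_insert, Set.image_insert_eq]
  rw [hE₂, hE, Submodule.span_insert_insert_sub, ← Set.image_insert_eq,
    finrank_span_insert_image extCLin_injective hw]

theorem linkRank_signFixReactions (hr : (x, y + C) ∈ E) :
    linkRank E + 1 ≤ linkRank (signFixReactions E x y C) ∧
      linkRank (signFixReactions E x y C) ≤ linkRank E + 2 := by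
  rw [signFixReactions]
  generalize hEs : E.erase (x, y + C) = Es
  have hE : E = insert (x, y + C) Es := hEs ▸ (insert_erase hr).symm
  have hbPrime := extC_ne_of_apply_none_ne_zero (z := bPrime (σ := κ)) one_ne_zero
  rw [hE]
  by_cases hC : C = 0
  · subst hC
    rw [add_zero, extB'_zero, linkRank_subdivide_image extC_injective hbPrime]
    constructor <;> linarith
  · rw [linkRank_add_pendants_image extC_injective hbPrime
      (extC_ne_of_apply_none_ne_zero (z := extB' C) one_ne_zero) (extB'_ne_bPrime hC)]
    have := linkRank_le_insert x (y + C) Es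
    have := linkRank_insert_le x (y + C) Es
    constructor <;> linarith

end SignFix

theorem signFixCRN_deficiency_step_general {d : ℕ} (N₁ : CRN (Fin d))
    (A B : Fin d) (p₁ p₂ : ℕ) (C₁ C₂ : Fin d → ℕ)
    (hr₁ : ((fun i => mono A p₁ i + C₁ i), (fun i => mono B p₂ i + C₂ i))
      ∈ N₁.reactions) :
    0 ≤ (signFixCRN N₁ A B p₁ p₂ C₁ C₂).deficiency - N₁.deficiency ∧
    (signFixCRN N₁ A B p₁ p₂ C₁ C₂).deficiency - N₁.deficiency ≤ 1 := by
  have hs := finrank_stoichSubspace_signFixReactions (y := mono B p₂) (C := C₂) hr₁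
  have hℓ := linkRank_signFixReactions (y := mono B p₂) (C := C₂) hr₁
  rw [CRN.deficiency_eq_linkRank_sub_srank, CRN.deficiency_eq_linkRank_sub_srank,
    CRN.srank_eq_finrank_stoichSubspace, CRN.srank_eq_finrank_stoichSubspace, signFixCRN_reactions,
    hs]
  push_cast
  constructor <;> linarith [hℓ.1, hℓ.2]

/-- One step of the sign fixing algorithm changes the deficiency `δ = n - ℓ - s`
by at most one, and never decreases it: `0 ≤ δ₂ - δ₁ ≤ 1`. -/
theorem signFixCRN_deficiency_step {d : ℕ} (N₁ : CRN (Fin d))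
    (A B : Fin d) (hAB : A ≠ B)
    (p₁ p₂ p₃ p₄ : ℕ) (hp₁ : 0 < p₁) (hp₂ : 0 < p₂) (hp₃ : 0 < p₃) (hp₄ : 0 < p₄)
    (C₁ C₂ C₃ C₄ : Fin d → ℕ)
    (hC₁ : C₁ A = 0 ∧ C₁ B = 0) (hC₂ : C₂ A = 0 ∧ C₂ B = 0)
    (hC₃ : C₃ A = 0 ∧ C₃ B = 0) (hC₄ : C₄ A = 0 ∧ C₄ B = 0)
    (hr₁ : ((fun i => mono A p₁ i + C₁ i), (fun i => mono B p₂ i + C₂ i))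
      ∈ N₁.reactions)
    (hr₂ : ((fun i => mono A p₃ i + mono B p₄ i + C₃ i), C₄) ∈ N₁.reactions) :
    0 ≤ (signFixCRN N₁ A B p₁ p₂ C₁ C₂).deficiency - N₁.deficiency ∧
    (signFixCRN N₁ A B p₁ p₂ C₁ C₂).deficiency - N₁.deficiency ≤ 1 :=
  signFixCRN_deficiency_step_general N₁ A B p₁ p₂ C₁ C₂ hr₁
end
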